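/- arXiv:2011.13355 — 3 statements merged into one kernel-verified Lean document; each statement's English description precedes it below -/
import Mathlib

section
/- Let 1 < p < P be real numbers, set θ := p/P ∈ (0,1), and for each integer j ≥ 0 set ε_j := θ^{-j} - 1 and C(ε) := (1+ε)^p/(1+pε). Then for every κ > 0 the partial products ∏_{j=0}^n C(ε_j)^{κ θ^j} are uniformly bounded in n; in fact ∏_{j=0}^n C(ε_j)^{κ θ^j} ≤ exp( κ(p-1) log(1/θ) · θ/(1-θ)^2 ) for every n ≥ 0. -/
/-!
Since `1 + pε ≥ 1 + ε`, the constant `C(ε) = (1+ε)^p/(1+pε)` is at most `(1+ε)^(p-1)`. With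
`1 + ε_j = θ^{-j}` the `j`-th factor is therefore at most `exp(κ (p-1) log(1/θ) · j θ^j)`, and the
product is bounded by the exponential of the full series `∑ j θ^j = θ/(1-θ)^2`.
-/

open Real Finset

noncomputable def moserConstant (p ε : ℝ) : ℝ := (1 + ε) ^ p / (1 + p * ε)

section moserConstant

variable {p ε : ℝ}

lemma moserConstant_nonneg (hp : 0 ≤ p) (hε : 0 ≤ ε) : 0 ≤ moserConstant p ε :=
  div_nonneg (rpow_nonneg (by linarith) p) (by positivity)

lemma moserConstant_le_rpow (hp : 1 ≤ p) (hε : 0 ≤ ε) :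
    moserConstant p ε ≤ (1 + ε) ^ (p - 1) := by
  have hε1 : 0 < 1 + ε := by linarith
  rw [moserConstant, rpow_sub_one hε1.ne']
  exact div_le_div_of_nonneg_left (rpow_nonneg hε1.le p) hε1 (by nlinarith)

lemma moserConstant_rpow_le_exp (hp : 1 ≤ p) (hε : 0 ≤ ε) {t : ℝ} (ht : 0 ≤ t) :
    moserConstant p ε ^ t ≤ exp (t * ((p - 1) * log (1 + ε))) := calc
  moserConstant p ε ^ t ≤ ((1 + ε) ^ (p - 1)) ^ t :=
    rpow_le_rpow (moserConstant_nonneg (by linarith) hε) (moserConstant_le_rpow hp hε) ht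
  _ = exp (t * ((p - 1) * log (1 + ε))) := by
    rw [← rpow_mul (by linarith), rpow_def_of_pos (by linarith)]
    ring_nf

end moserConstant

lemma sum_range_coe_mul_pow_le {θ : ℝ} (hθ₀ : 0 ≤ θ) (hθ₁ : θ < 1) (n : ℕ) :
    ∑ j ∈ range n, (j : ℝ) * θ ^ j ≤ θ / (1 - θ) ^ 2 :=
  sum_le_hasSum _ (fun j _ ↦ by positivity)
    (hasSum_coe_mul_geometric_of_norm_lt_one (by rwa [norm_of_nonneg hθ₀]))

/-- uniform boundedness of the Moser iteration products.  With
`θ = p/P ∈ (0,1)`, `ε_j = θ^{-j} - 1` (so `1 + ε_j = (P/p)^j`) and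
`C(ε) = (1+ε)^p/(1+pε)`, for every `κ > 0` and every `n`,
`∏_{j=0}^n C(ε_j)^{κ θ^j} ≤ exp(κ (p-1) log(1/θ) · θ/(1-θ)^2)`. -/
theorem stmt_5 (p P : ℝ) (hp : 1 < p) (hP : p < P) :
    ∀ κ > (0:ℝ), ∀ n : ℕ,
      (∏ j ∈ Finset.range (n + 1),
        ((1 + ((P / p) ^ j - 1)) ^ p / (1 + p * ((P / p) ^ j - 1))) ^ (κ * (p / P) ^ j)) ≤
      Real.exp (κ * (p - 1) * Real.log (1 / (p / P)) * ((p / P) / (1 - p / P) ^ 2)) := by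
  intro κ hκ n
  rw [one_div_div]
  have hp₀ : 0 < p := by linarith
  have hθ₀ : 0 < p / P := div_pos hp₀ (by linarith)
  have hθ₁ : p / P < 1 := (div_lt_one (by linarith)).2 hP
  have hε (j : ℕ) : 0 ≤ (P / p) ^ j - 1 :=
    sub_nonneg.2 (one_le_pow₀ ((one_le_div hp₀).2 hP.le))
  set c := κ * (p - 1) * log (P / p)
  have hc : 0 ≤ c := by
    have : 0 ≤ log (P / p) := log_nonneg ((one_le_div hp₀).2 hP.le)
    positivity
  have hfactor (j : ℕ) :
      moserConstant p ((P / p) ^ j - 1) ^ (κ * (p / P) ^ j) ≤ exp (c * (j * (p / P) ^ j)) := by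
    refine (moserConstant_rpow_le_exp hp.le (hε j) (by positivity)).trans_eq ?_
    rw [add_sub_cancel, log_pow]
    simp only [c]
    congr 1
    ring
  calc ∏ j ∈ range (n + 1), moserConstant p ((P / p) ^ j - 1) ^ (κ * (p / P) ^ j)
      ≤ ∏ j ∈ range (n + 1), exp (c * (j * (p / P) ^ j)) :=
        prod_le_prod (fun j _ ↦ rpow_nonneg (moserConstant_nonneg hp₀.le (hε j)) _)
          (fun j _ ↦ hfactor j)
    _ = exp (c * ∑ j ∈ range (n + 1), (j : ℝ) * (p / P) ^ j) := by rw [mul_sum, exp_sum]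
    _ ≤ exp (c * ((p / P) / (1 - p / P) ^ 2)) :=
        exp_le_exp.2 (mul_le_mul_of_nonneg_left (sum_range_coe_mul_pow_le hθ₀.le hθ₁ _) hc)
end

section
/- Let p > 1, ρ0 > 0, Λ ≥ 0, let a : (0,ρ0) → (0,∞) be measurable with ∫_0^{ρ0} a(ζ)^{-1/(p-1)} dζ < ∞, and let A > ∫_0^{ρ0} e^{Λτ} a(τ)^{-1/(p-1)} dτ. Define ψ(y) = ∫_0^y e^{-Λζ/(p-1)} a(ζ)^{-1/(p-1)} (A - ∫_0^ζ e^{Λτ} a(τ)^{-1/(p-1)} dτ)^{1/(p-1)} dζ for y ∈ [0,ρ0]. Then ψ is well defined and continuous on [0,ρ0], ψ(0) = 0, ψ is strictly increasing, and with C := max{ A^{1/(p-1)}, e^{Λρ0/(p-1)} (A - ∫_0^{ρ0} e^{Λτ} a(τ)^{-1/(p-1)} dτ)^{-1/(p-1)} } one has, for every y ∈ (0,ρ0], (1/C)·∫_0^y a(ζ)^{-1/(p-1)} dζ ≤ ψ(y) ≤ C·∫_0^y a(ζ)^{-1/(p-1)} dζ. -/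
open MeasureTheory Set

/-- The one-dimensional profile of the comparison supersolution (formula (37)):
`ψ(y) = ∫_0^y e^{-Λζ/(p-1)} a(ζ)^{-1/(p-1)} (A - ∫_0^ζ e^{Λτ} a(τ)^{-1/(p-1)} dτ)^{1/(p-1)} dζ`. -/
noncomputable def psiProf (p Λ A : ℝ) (a : ℝ → ℝ) (y : ℝ) : ℝ :=
  ∫ ζ in (0:ℝ)..y,
    Real.exp (-Λ * ζ / (p - 1)) * a ζ ^ (-(1 / (p - 1))) *
      (A - ∫ τ in (0:ℝ)..ζ, Real.exp (Λ * τ) * a τ ^ (-(1 / (p - 1)))) ^ (1 / (p - 1))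

namespace Stmt6Aux

noncomputable def bF (p : ℝ) (a : ℝ → ℝ) : ℝ → ℝ := fun ζ => a ζ ^ (-(1 / (p - 1)))

noncomputable def eF (p Λ : ℝ) (a : ℝ → ℝ) : ℝ → ℝ := fun τ => Real.exp (Λ * τ) * bF p a τ

noncomputable def FF (p Λ : ℝ) (a : ℝ → ℝ) : ℝ → ℝ := fun ζ => ∫ τ in (0:ℝ)..ζ, eF p Λ a τ

noncomputable def gF (p Λ A : ℝ) (a : ℝ → ℝ) : ℝ → ℝ := fun ζ =>
  Real.exp (-Λ * ζ / (p - 1)) * bF p a ζ * (A - FF p Λ a ζ) ^ (1 / (p - 1))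

lemma psiProf_eq (p Λ A : ℝ) (a : ℝ → ℝ) (y : ℝ) :
    psiProf p Λ A a y = ∫ ζ in (0:ℝ)..y, gF p Λ A a ζ := rfl

variable {p ρ0 Λ A : ℝ} {a : ℝ → ℝ}

lemma bF_pos (ha_pos : ∀ ζ ∈ Ioo (0:ℝ) ρ0, 0 < a ζ) {ζ : ℝ} (hζ : ζ ∈ Ioo (0:ℝ) ρ0) :
    0 < bF p a ζ :=
  Real.rpow_pos_of_pos (ha_pos ζ hζ) _

lemma eF_int (hρ : 0 < ρ0) (hΛ : 0 ≤ Λ)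
    (ha_pos : ∀ ζ ∈ Ioo (0:ℝ) ρ0, 0 < a ζ)
    (hint : IntegrableOn (bF p a) (Ioo (0:ℝ) ρ0)) :
    IntegrableOn (eF p Λ a) (Icc (0:ℝ) ρ0) := by
  rw [integrableOn_Icc_iff_integrableOn_Ioo]
  refine Integrable.mono' (hint.const_mul (Real.exp (Λ * ρ0)))
    ((Real.continuous_exp.comp (continuous_const.mul continuous_id)).aestronglyMeasurable.mul
      hint.aestronglyMeasurable) ?_
  filter_upwards [ae_restrict_mem measurableSet_Ioo] with ζ hζ
  have hb : 0 < bF p a ζ := bF_pos ha_pos hζ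
  have hexp : Real.exp (Λ * ζ) ≤ Real.exp (Λ * ρ0) :=
    Real.exp_le_exp.2 (mul_le_mul_of_nonneg_left hζ.2.le hΛ)
  have : eF p Λ a ζ = Real.exp (Λ * ζ) * bF p a ζ := rfl
  rw [Real.norm_eq_abs, this, abs_of_nonneg (by positivity)]
  exact mul_le_mul_of_nonneg_right hexp hb.le

lemma eF_ii (hρ : 0 < ρ0) (hΛ : 0 ≤ Λ)
    (ha_pos : ∀ ζ ∈ Ioo (0:ℝ) ρ0, 0 < a ζ)
    (hint : IntegrableOn (bF p a) (Ioo (0:ℝ) ρ0))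
    {x y : ℝ} (hx : 0 ≤ x) (hxy : x ≤ y) (hy : y ≤ ρ0) :
    IntervalIntegrable (eF p Λ a) volume x y := by
  rw [intervalIntegrable_iff_integrableOn_Ioc_of_le hxy]
  exact (eF_int hρ hΛ ha_pos hint).mono_set fun t ht => ⟨hx.trans ht.1.le, ht.2.trans hy⟩

lemma FF_mono (hρ : 0 < ρ0) (hΛ : 0 ≤ Λ)
    (ha_pos : ∀ ζ ∈ Ioo (0:ℝ) ρ0, 0 < a ζ)
    (hint : IntegrableOn (bF p a) (Ioo (0:ℝ) ρ0))
    {x y : ℝ} (hx : 0 ≤ x) (hxy : x ≤ y) (hy : y ≤ ρ0) :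
    FF p Λ a x ≤ FF p Λ a y := by
  have hi1 : IntervalIntegrable (eF p Λ a) volume 0 x :=
    eF_ii hρ hΛ ha_pos hint le_rfl hx (hxy.trans hy)
  have hi2 : IntervalIntegrable (eF p Λ a) volume x y :=
    eF_ii hρ hΛ ha_pos hint hx hxy hy
  have hadd := intervalIntegral.integral_add_adjacent_intervals hi1 hi2
  have hpos : 0 ≤ ∫ τ in x..y, eF p Λ a τ := by
    rw [intervalIntegral.integral_of_le hxy, MeasureTheory.integral_Ioc_eq_integral_Ioo]
    refine setIntegral_nonneg measurableSet_Ioo fun τ hτ => ?_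
    have hτ' : τ ∈ Ioo (0:ℝ) ρ0 := ⟨lt_of_le_of_lt hx hτ.1, lt_of_lt_of_le hτ.2 hy⟩
    have hb : 0 < bF p a τ := bF_pos ha_pos hτ'
    have : eF p Λ a τ = Real.exp (Λ * τ) * bF p a τ := rfl
    rw [this]; positivity
  show FF p Λ a x ≤ FF p Λ a y
  have h1 : FF p Λ a x = ∫ τ in (0:ℝ)..x, eF p Λ a τ := rfl
  have h2 : FF p Λ a y = ∫ τ in (0:ℝ)..y, eF p Λ a τ := rfl
  rw [h1, h2, ← hadd]
  linarith

lemma FF_zero : FF p Λ a 0 = 0 := intervalIntegral.integral_same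

lemma FF_nonneg (hρ : 0 < ρ0) (hΛ : 0 ≤ Λ)
    (ha_pos : ∀ ζ ∈ Ioo (0:ℝ) ρ0, 0 < a ζ)
    (hint : IntegrableOn (bF p a) (Ioo (0:ℝ) ρ0))
    {ζ : ℝ} (h0 : 0 ≤ ζ) (h1 : ζ ≤ ρ0) : 0 ≤ FF p Λ a ζ := by
  have := FF_mono (p := p) hρ hΛ ha_pos hint le_rfl h0 h1
  rwa [FF_zero] at this

/-- Pointwise bounds for the integrand. -/
lemma gF_bounds (hp : 1 < p) (hρ : 0 < ρ0) (hΛ : 0 ≤ Λ)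
    (ha_pos : ∀ ζ ∈ Ioo (0:ℝ) ρ0, 0 < a ζ)
    (hint : IntegrableOn (bF p a) (Ioo (0:ℝ) ρ0))
    (hA : FF p Λ a ρ0 < A)
    {ζ : ℝ} (hζ : ζ ∈ Ioo (0:ℝ) ρ0) :
    Real.exp (-Λ * ρ0 / (p - 1)) * (A - FF p Λ a ρ0) ^ (1 / (p - 1)) * bF p a ζ
      ≤ gF p Λ A a ζ ∧
    gF p Λ A a ζ ≤ A ^ (1 / (p - 1)) * bF p a ζ := by
  have hp1 : (0:ℝ) < p - 1 := by linarith
  have hq : (0:ℝ) ≤ 1 / (p - 1) := by positivity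
  have hb : 0 < bF p a ζ := bF_pos ha_pos hζ
  have hF0 : 0 ≤ FF p Λ a ζ := FF_nonneg hρ hΛ ha_pos hint hζ.1.le hζ.2.le
  have hFle : FF p Λ a ζ ≤ FF p Λ a ρ0 := FF_mono hρ hΛ ha_pos hint hζ.1.le hζ.2.le le_rfl
  have hAF : 0 < A - FF p Λ a ρ0 := by linarith
  have hAFζ : 0 < A - FF p Λ a ζ := by linarith
  have hgdef : gF p Λ A a ζ
      = Real.exp (-Λ * ζ / (p - 1)) * bF p a ζ * (A - FF p Λ a ζ) ^ (1 / (p - 1)) := rfl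
  constructor
  · rw [hgdef]
    have hexp : Real.exp (-Λ * ρ0 / (p - 1)) ≤ Real.exp (-Λ * ζ / (p - 1)) := by
      exact Real.exp_le_exp.2 ((div_le_div_iff_of_pos_right hp1).2 (by nlinarith [hζ.2]))
    have hrpow : (A - FF p Λ a ρ0) ^ (1 / (p - 1)) ≤ (A - FF p Λ a ζ) ^ (1 / (p - 1)) :=
      Real.rpow_le_rpow hAF.le (by linarith) hq
    have h1 : Real.exp (-Λ * ρ0 / (p - 1)) * (A - FF p Λ a ρ0) ^ (1 / (p - 1))
        ≤ Real.exp (-Λ * ζ / (p - 1)) * (A - FF p Λ a ζ) ^ (1 / (p - 1)) :=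
      mul_le_mul hexp hrpow (Real.rpow_nonneg hAF.le _) (Real.exp_pos _).le
    calc Real.exp (-Λ * ρ0 / (p - 1)) * (A - FF p Λ a ρ0) ^ (1 / (p - 1)) * bF p a ζ
        ≤ Real.exp (-Λ * ζ / (p - 1)) * (A - FF p Λ a ζ) ^ (1 / (p - 1)) * bF p a ζ :=
          mul_le_mul_of_nonneg_right h1 hb.le
      _ = Real.exp (-Λ * ζ / (p - 1)) * bF p a ζ * (A - FF p Λ a ζ) ^ (1 / (p - 1)) := by ring
  · rw [hgdef]
    have hexp : Real.exp (-Λ * ζ / (p - 1)) ≤ 1 := by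
      apply Real.exp_le_one_iff.2
      apply div_nonpos_of_nonpos_of_nonneg ?_ hp1.le
      nlinarith [hζ.1]
    have hrpow : (A - FF p Λ a ζ) ^ (1 / (p - 1)) ≤ A ^ (1 / (p - 1)) :=
      Real.rpow_le_rpow hAFζ.le (by linarith) hq
    calc Real.exp (-Λ * ζ / (p - 1)) * bF p a ζ * (A - FF p Λ a ζ) ^ (1 / (p - 1))
        ≤ 1 * bF p a ζ * (A ^ (1 / (p - 1))) := by
          apply mul_le_mul (mul_le_mul_of_nonneg_right hexp hb.le) hrpow
            (Real.rpow_nonneg hAFζ.le _) (by positivity)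
      _ = A ^ (1 / (p - 1)) * bF p a ζ := by ring

lemma gF_pos (hp : 1 < p) (hρ : 0 < ρ0) (hΛ : 0 ≤ Λ)
    (ha_pos : ∀ ζ ∈ Ioo (0:ℝ) ρ0, 0 < a ζ)
    (hint : IntegrableOn (bF p a) (Ioo (0:ℝ) ρ0))
    (hA : FF p Λ a ρ0 < A)
    {ζ : ℝ} (hζ : ζ ∈ Ioo (0:ℝ) ρ0) : 0 < gF p Λ A a ζ := by
  have hb : 0 < bF p a ζ := bF_pos ha_pos hζ
  have hFle : FF p Λ a ζ ≤ FF p Λ a ρ0 := FF_mono hρ hΛ ha_pos hint hζ.1.le hζ.2.le le_rfl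
  have hAFζ : 0 < A - FF p Λ a ζ := by linarith
  have hgdef : gF p Λ A a ζ
      = Real.exp (-Λ * ζ / (p - 1)) * bF p a ζ * (A - FF p Λ a ζ) ^ (1 / (p - 1)) := rfl
  rw [hgdef]
  have := Real.rpow_pos_of_pos hAFζ (1 / (p - 1))
  positivity

lemma FF_cont (hρ : 0 < ρ0) (hΛ : 0 ≤ Λ)
    (ha_pos : ∀ ζ ∈ Ioo (0:ℝ) ρ0, 0 < a ζ)
    (hint : IntegrableOn (bF p a) (Ioo (0:ℝ) ρ0)) :
    ContinuousOn (FF p Λ a) (Icc (0:ℝ) ρ0) := by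
  have h := intervalIntegral.continuousOn_primitive_interval
    (f := eF p Λ a) (μ := volume) (a := 0) (b := ρ0) ?_
  · rwa [uIcc_of_le hρ.le] at h
  · rw [uIcc_of_le hρ.le]; exact eF_int hρ hΛ ha_pos hint

lemma gF_int (hp : 1 < p) (hρ : 0 < ρ0) (hΛ : 0 ≤ Λ)
    (ha_pos : ∀ ζ ∈ Ioo (0:ℝ) ρ0, 0 < a ζ)
    (hint : IntegrableOn (bF p a) (Ioo (0:ℝ) ρ0))
    (hA : FF p Λ a ρ0 < A) :
    IntegrableOn (gF p Λ A a) (Icc (0:ℝ) ρ0) := by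
  have hp1 : (0:ℝ) < p - 1 := by linarith
  rw [integrableOn_Icc_iff_integrableOn_Ioo]
  have hmeas : AEStronglyMeasurable (gF p Λ A a) (volume.restrict (Ioo (0:ℝ) ρ0)) := by
    have hFc : ContinuousOn (fun ζ => (A - FF p Λ a ζ) ^ (1 / (p - 1))) (Ioo (0:ℝ) ρ0) := by
      apply ContinuousOn.rpow_const
      · exact (continuousOn_const.sub ((FF_cont hρ hΛ ha_pos hint).mono Ioo_subset_Icc_self))
      · intro x hx
        right; positivity
    have h1 : AEStronglyMeasurable (fun ζ => (A - FF p Λ a ζ) ^ (1 / (p - 1)))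
        (volume.restrict (Ioo (0:ℝ) ρ0)) :=
      (hFc.aemeasurable measurableSet_Ioo).aestronglyMeasurable
    exact ((Real.continuous_exp.comp
      ((continuous_const.mul continuous_id).div_const (p - 1))).aestronglyMeasurable.mul
        hint.aestronglyMeasurable).mul h1
  refine Integrable.mono' (hint.const_mul (A ^ (1 / (p - 1)))) hmeas ?_
  filter_upwards [ae_restrict_mem measurableSet_Ioo] with ζ hζ
  have hb := gF_bounds hp hρ hΛ ha_pos hint hA hζ
  have h0 : 0 ≤ gF p Λ A a ζ := (gF_pos hp hρ hΛ ha_pos hint hA hζ).le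
  rw [Real.norm_eq_abs, abs_of_nonneg h0]
  exact hb.2

lemma gF_ii (hp : 1 < p) (hρ : 0 < ρ0) (hΛ : 0 ≤ Λ)
    (ha_pos : ∀ ζ ∈ Ioo (0:ℝ) ρ0, 0 < a ζ)
    (hint : IntegrableOn (bF p a) (Ioo (0:ℝ) ρ0))
    (hA : FF p Λ a ρ0 < A)
    {x y : ℝ} (hx : 0 ≤ x) (hxy : x ≤ y) (hy : y ≤ ρ0) :
    IntervalIntegrable (gF p Λ A a) volume x y := by
  rw [intervalIntegrable_iff_integrableOn_Ioc_of_le hxy]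
  exact (gF_int hp hρ hΛ ha_pos hint hA).mono_set fun t ht => ⟨hx.trans ht.1.le, ht.2.trans hy⟩

end Stmt6Aux

open Stmt6Aux in
/-- `ψ` is continuous on `[0,ρ0]`, `ψ(0) = 0`, `ψ` is strictly increasing, and
with `C = max{A^{1/(p-1)}, e^{Λρ0/(p-1)} (A - ∫_0^{ρ0} e^{Λτ}a^{-1/(p-1)})^{-1/(p-1)}}` one has
`(1/C)∫_0^y a^{-1/(p-1)} ≤ ψ(y) ≤ C ∫_0^y a^{-1/(p-1)}` for all `y ∈ (0,ρ0]`. -/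
theorem stmt_6 (p ρ0 Λ A : ℝ) (hp : 1 < p) (hρ : 0 < ρ0) (hΛ : 0 ≤ Λ)
    (a : ℝ → ℝ) (ha_meas : Measurable a) (ha_pos : ∀ ζ ∈ Ioo (0:ℝ) ρ0, 0 < a ζ)
    (hint : IntegrableOn (fun ζ => a ζ ^ (-(1 / (p - 1)))) (Ioo (0:ℝ) ρ0))
    (hA : (∫ τ in (0:ℝ)..ρ0, Real.exp (Λ * τ) * a τ ^ (-(1 / (p - 1)))) < A) :
    let C : ℝ := max (A ^ (1 / (p - 1)))
      (Real.exp (Λ * ρ0 / (p - 1)) *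
        (A - ∫ τ in (0:ℝ)..ρ0, Real.exp (Λ * τ) * a τ ^ (-(1 / (p - 1)))) ^ (-(1 / (p - 1))));
    ContinuousOn (psiProf p Λ A a) (Icc 0 ρ0) ∧
    psiProf p Λ A a 0 = 0 ∧
    StrictMonoOn (psiProf p Λ A a) (Icc 0 ρ0) ∧
    ∀ y ∈ Ioc (0:ℝ) ρ0,
      (1 / C) * (∫ ζ in (0:ℝ)..y, a ζ ^ (-(1 / (p - 1)))) ≤ psiProf p Λ A a y ∧
      psiProf p Λ A a y ≤ C * (∫ ζ in (0:ℝ)..y, a ζ ^ (-(1 / (p - 1)))) := by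
  intro C
  have hp1 : (0:ℝ) < p - 1 := by linarith
  have hq : (0:ℝ) ≤ 1 / (p - 1) := by positivity
  have hint' : IntegrableOn (bF p a) (Ioo (0:ℝ) ρ0) := hint
  have hA' : FF p Λ a ρ0 < A := hA
  have hC : C = max (A ^ (1 / (p - 1)))
      (Real.exp (Λ * ρ0 / (p - 1)) * (A - FF p Λ a ρ0) ^ (-(1 / (p - 1)))) := rfl
  have hFρ0 : 0 ≤ FF p Λ a ρ0 := FF_nonneg hρ hΛ ha_pos hint' hρ.le le_rfl
  have hApos : 0 < A := lt_of_le_of_lt hFρ0 hA'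
  have hAF : 0 < A - FF p Λ a ρ0 := by linarith
  have hCpos : 0 < C := by
    rw [hC]
    exact lt_max_of_lt_left (Real.rpow_pos_of_pos hApos _)
  refine ⟨?_, ?_, ?_, ?_⟩
  · -- continuity
    have h := intervalIntegral.continuousOn_primitive_interval
      (f := gF p Λ A a) (μ := volume) (a := 0) (b := ρ0) ?_
    · rw [uIcc_of_le hρ.le] at h
      exact h
    · rw [uIcc_of_le hρ.le]; exact gF_int hp hρ hΛ ha_pos hint' hA'
  · exact intervalIntegral.integral_same
  · -- strict monotonicity
    intro x hx y hy hxy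
    have hi1 : IntervalIntegrable (gF p Λ A a) volume 0 x :=
      gF_ii hp hρ hΛ ha_pos hint' hA' le_rfl hx.1 hx.2
    have hi2 : IntervalIntegrable (gF p Λ A a) volume x y :=
      gF_ii hp hρ hΛ ha_pos hint' hA' hx.1 hxy.le hy.2
    have hadd := intervalIntegral.integral_add_adjacent_intervals hi1 hi2
    have hpos : 0 < ∫ t in x..y, gF p Λ A a t :=
      intervalIntegral.intervalIntegral_pos_of_pos_on hi2
        (fun t ht => gF_pos hp hρ hΛ ha_pos hint' hA'
          ⟨lt_of_le_of_lt hx.1 ht.1, lt_of_lt_of_le ht.2 hy.2⟩) hxy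
    rw [psiProf_eq, psiProf_eq, ← hadd]
    linarith
  · -- the two-sided bound
    intro y hy
    have hIoo : Ioo (0:ℝ) y ⊆ Ioo (0:ℝ) ρ0 := fun t ht => ⟨ht.1, lt_of_lt_of_le ht.2 hy.2⟩
    have hpsieq : psiProf p Λ A a y = ∫ ζ in Ioo (0:ℝ) y, gF p Λ A a ζ := by
      rw [psiProf_eq, intervalIntegral.integral_of_le hy.1.le,
        MeasureTheory.integral_Ioc_eq_integral_Ioo]
    have hbeq : (∫ ζ in (0:ℝ)..y, a ζ ^ (-(1 / (p - 1))))
        = ∫ ζ in Ioo (0:ℝ) y, bF p a ζ := by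
      rw [intervalIntegral.integral_of_le hy.1.le,
        MeasureTheory.integral_Ioc_eq_integral_Ioo]
      rfl
    have hgInt : IntegrableOn (gF p Λ A a) (Ioo (0:ℝ) y) :=
      (gF_int hp hρ hΛ ha_pos hint' hA').mono_set (hIoo.trans Ioo_subset_Icc_self)
    have hbInt : IntegrableOn (bF p a) (Ioo (0:ℝ) y) := hint'.mono_set hIoo
    constructor
    · -- lower bound
      set k : ℝ := Real.exp (-Λ * ρ0 / (p - 1)) * (A - FF p Λ a ρ0) ^ (1 / (p - 1)) with hk
      have hkpos : 0 < k := by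
        have := Real.rpow_pos_of_pos hAF (1 / (p - 1))
        positivity
      have hkinv : k⁻¹ = Real.exp (Λ * ρ0 / (p - 1)) * (A - FF p Λ a ρ0) ^ (-(1 / (p - 1))) := by
        rw [hk, mul_inv, ← Real.exp_neg, Real.rpow_neg hAF.le]
        ring_nf
      have hCk : k⁻¹ ≤ C := by rw [hkinv, hC]; exact le_max_right _ _
      have h1Ck : 1 / C ≤ k := by
        rw [div_le_iff₀ hCpos]
        calc (1:ℝ) = k * k⁻¹ := (mul_inv_cancel₀ hkpos.ne').symm
          _ ≤ k * C := mul_le_mul_of_nonneg_left hCk hkpos.le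
      rw [hpsieq, hbeq, ← MeasureTheory.integral_const_mul]
      refine setIntegral_mono_on (hbInt.const_mul _) hgInt measurableSet_Ioo fun ζ hζ => ?_
      have hζ' := hIoo hζ
      have hb : 0 < bF p a ζ := bF_pos ha_pos hζ'
      calc (1 / C) * bF p a ζ ≤ k * bF p a ζ := mul_le_mul_of_nonneg_right h1Ck hb.le
        _ ≤ gF p Λ A a ζ := (gF_bounds hp hρ hΛ ha_pos hint' hA' hζ').1
    · -- upper bound
      have hAC : A ^ (1 / (p - 1)) ≤ C := by rw [hC]; exact le_max_left _ _
      rw [hpsieq, hbeq, ← MeasureTheory.integral_const_mul]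
      refine setIntegral_mono_on hgInt (hbInt.const_mul _) measurableSet_Ioo fun ζ hζ => ?_
      have hζ' := hIoo hζ
      have hb : 0 < bF p a ζ := bF_pos ha_pos hζ'
      calc gF p Λ A a ζ ≤ A ^ (1 / (p - 1)) * bF p a ζ :=
            (gF_bounds hp hρ hΛ ha_pos hint' hA' hζ').2
        _ ≤ C * bF p a ζ := mul_le_mul_of_nonneg_right hAC hb.le
end

section
/- Let p > 1, ρ0 > 0, Λ ≥ 0, let a : (0,ρ0) → (0,∞) be measurable with ∫_0^{ρ0} a(ζ)^{-1/(p-1)} dζ < ∞, let A > ∫_0^{ρ0} e^{Λτ} a(τ)^{-1/(p-1)} dτ, and define h(y) := e^{-Λy} (A - ∫_0^y e^{Λτ} a(τ)^{-1/(p-1)} dτ) for y ∈ [0,ρ0]. Then: (a) h is continuous and h(y) > 0 for all y ∈ [0,ρ0]; (b) for almost every y ∈ (0,ρ0), a(y)·(ψ'(y))^{p-1} = h(y), where ψ'(y) = e^{-Λy/(p-1)} a(y)^{-1/(p-1)} (A - ∫_0^y e^{Λτ} a(τ)^{-1/(p-1)} dτ)^{1/(p-1)}; (c) for almost every y ∈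 (0,ρ0), h is differentiable at y and -h'(y) - Λ h(y) = a(y)^{-1/(p-1)}. -/
/-!
The bracket `A - ∫_0^y e^{Λτ} a(τ)^{-1/(p-1)} dτ` is `A` minus the primitive of a nonnegative
integrable function, so it is continuous and smallest at `y = ρ0`, where it is positive by the
choice of `A`. Part (b) is exponent arithmetic. For (c), Lebesgue's differentiation theorem
differentiates the primitive at almost every point, and the product rule does the rest.
-/

open MeasureTheory Set

/-- The weighted flux `h(y) = e^{-Λy} (A - ∫_0^y e^{Λτ} a(τ)^{-1/(p-1)} dτ)` of the
one-dimensional supersolution profile. -/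
noncomputable def fluxProf (p Λ A : ℝ) (a : ℝ → ℝ) (y : ℝ) : ℝ :=
  Real.exp (-Λ * y) * (A - ∫ τ in (0:ℝ)..y, Real.exp (Λ * τ) * a τ ^ (-(1 / (p - 1))))

theorem intervalIntegral.integral_le_integral_of_nonneg_on_Ioo {f : ℝ → ℝ} {a b y : ℝ}
    (hf : ∀ t ∈ Ioo a b, 0 ≤ f t) (hfi : IntervalIntegrable f volume a b) (hy : y ∈ Icc a b) :
    ∫ t in a..y, f t ≤ ∫ t in a..b, f t := by
  refine integral_mono_interval le_rfl hy.1 hy.2 ?_ hfi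
  rw [Filter.EventuallyLE, ← ae_restrict_congr_set Ioo_ae_eq_Ioc]
  exact ae_restrict_of_forall_mem measurableSet_Ioo hf

theorem mul_rpow_exp_div_mul_rpow_neg_inv_mul_rpow_inv {q x w c : ℝ} (hq : q ≠ 0) (hw : 0 < w)
    (hc : 0 ≤ c) :
    w * (Real.exp (x / q) * w ^ (-(1 / q)) * c ^ (1 / q)) ^ q = Real.exp x * c := by
  rw [Real.mul_rpow (by positivity) (by positivity), Real.mul_rpow (by positivity) (by positivity),
    ← Real.exp_mul, ← Real.rpow_mul hw.le, ← Real.rpow_mul hc, div_mul_cancel₀ x hq,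
    neg_mul, one_div_mul_cancel hq, Real.rpow_neg_one, Real.rpow_one]
  field_simp

theorem hasDerivAt_fluxProf {p Λ A : ℝ} {a : ℝ → ℝ} {y : ℝ}
    (hF : HasDerivAt (fun z => ∫ τ in (0:ℝ)..z, Real.exp (Λ * τ) * a τ ^ (-(1 / (p - 1))))
      (Real.exp (Λ * y) * a y ^ (-(1 / (p - 1)))) y) :
    HasDerivAt (fluxProf p Λ A a) (-Λ * fluxProf p Λ A a y - a y ^ (-(1 / (p - 1)))) y := by
  have hexp : HasDerivAt (fun z => Real.exp (-Λ * z)) (Real.exp (-Λ * y) * -Λ) y := by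
    simpa using ((hasDerivAt_id y).const_mul (-Λ)).exp
  have hinv : Real.exp (-Λ * y) * Real.exp (Λ * y) = 1 := by
    rw [← Real.exp_add]; simp
  refine (hexp.mul (hF.const_sub A)).congr_deriv ?_
  rw [fluxProf]
  linear_combination -a y ^ (-(1 / (p - 1))) * hinv

theorem stmt_8_general (p ρ0 Λ A : ℝ) (hp : 1 < p) (hρ : 0 < ρ0)
    (a : ℝ → ℝ) (ha_pos : ∀ ζ ∈ Ioo (0:ℝ) ρ0, 0 < a ζ)
    (hint : IntegrableOn (fun ζ => a ζ ^ (-(1 / (p - 1)))) (Ioo (0:ℝ) ρ0))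
    (hA : (∫ τ in (0:ℝ)..ρ0, Real.exp (Λ * τ) * a τ ^ (-(1 / (p - 1)))) < A) :
    (ContinuousOn (fluxProf p Λ A a) (Icc 0 ρ0) ∧
      ∀ y ∈ Icc (0:ℝ) ρ0, 0 < fluxProf p Λ A a y) ∧
    (∀ᵐ y ∂(volume.restrict (Ioo (0:ℝ) ρ0)),
      a y * (Real.exp (-Λ * y / (p - 1)) * a y ^ (-(1 / (p - 1))) *
        (A - ∫ τ in (0:ℝ)..y, Real.exp (Λ * τ) * a τ ^ (-(1 / (p - 1)))) ^ (1 / (p - 1)))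
          ^ (p - 1) = fluxProf p Λ A a y) ∧
    (∀ᵐ y ∂(volume.restrict (Ioo (0:ℝ) ρ0)),
      ∃ d : ℝ, HasDerivAt (fluxProf p Λ A a) d y ∧
        -d - Λ * fluxProf p Λ A a y = a y ^ (-(1 / (p - 1)))) := by
  set g : ℝ → ℝ := fun τ => Real.exp (Λ * τ) * a τ ^ (-(1 / (p - 1)))
  have hg : IntervalIntegrable g volume 0 ρ0 :=
    (intervalIntegrable_iff_integrableOn_Ioo_of_le hρ.le).2 <|
      hint.continuousOn_mul_of_subset (by fun_prop) isCompact_Icc measurableSet_Ioo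
        Ioo_subset_Icc_self
  have hgap : ∀ y ∈ Icc 0 ρ0, 0 < A - ∫ τ in (0:ℝ)..y, g τ := fun y hy =>
    sub_pos.2 <| (intervalIntegral.integral_le_integral_of_nonneg_on_Ioo
      (fun τ hτ => by have := ha_pos τ hτ; positivity) hg hy).trans_lt hA
  refine ⟨⟨?_, fun y hy => mul_pos (Real.exp_pos _) (hgap y hy)⟩, ?_, ?_⟩
  · have hprim := intervalIntegral.continuousOn_primitive_interval' hg left_mem_uIcc
    exact ((by fun_prop : Continuous fun y => Real.exp (-Λ * y)).continuousOn.mul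
      (continuousOn_const.sub hprim)).mono Icc_subset_uIcc
  · filter_upwards [ae_restrict_mem measurableSet_Ioo] with y hy
    exact mul_rpow_exp_div_mul_rpow_neg_inv_mul_rpow_inv (by linarith) (ha_pos y hy)
      (hgap y (Ioo_subset_Icc_self hy)).le
  · filter_upwards [ae_restrict_mem measurableSet_Ioo,
      ae_restrict_of_ae hg.ae_hasDerivAt_integral] with y hy hF
    exact ⟨_, hasDerivAt_fluxProf (hF (Icc_subset_uIcc (Ioo_subset_Icc_self hy)) 0 left_mem_uIcc),
      by ring⟩

/-- (a) `h` is continuous and positive on `[0,ρ0]`; (b) for a.e. `y ∈ (0,ρ0)`,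
`a(y) (ψ'(y))^{p-1} = h(y)` with the explicit formula for `ψ'`; (c) for a.e. `y ∈ (0,ρ0)`,
`h` is differentiable at `y` and `-h'(y) - Λ h(y) = a(y)^{-1/(p-1)}`. -/
theorem stmt_8 (p ρ0 Λ A : ℝ) (hp : 1 < p) (hρ : 0 < ρ0) (hΛ : 0 ≤ Λ)
    (a : ℝ → ℝ) (ha_meas : Measurable a) (ha_pos : ∀ ζ ∈ Ioo (0:ℝ) ρ0, 0 < a ζ)
    (hint : IntegrableOn (fun ζ => a ζ ^ (-(1 / (p - 1)))) (Ioo (0:ℝ) ρ0))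
    (hA : (∫ τ in (0:ℝ)..ρ0, Real.exp (Λ * τ) * a τ ^ (-(1 / (p - 1)))) < A) :
    (ContinuousOn (fluxProf p Λ A a) (Icc 0 ρ0) ∧
      ∀ y ∈ Icc (0:ℝ) ρ0, 0 < fluxProf p Λ A a y) ∧
    (∀ᵐ y ∂(volume.restrict (Ioo (0:ℝ) ρ0)),
      a y * (Real.exp (-Λ * y / (p - 1)) * a y ^ (-(1 / (p - 1))) *
        (A - ∫ τ in (0:ℝ)..y, Real.exp (Λ * τ) * a τ ^ (-(1 / (p - 1)))) ^ (1 / (p - 1)))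
          ^ (p - 1) = fluxProf p Λ A a y) ∧
    (∀ᵐ y ∂(volume.restrict (Ioo (0:ℝ) ρ0)),
      ∃ d : ℝ, HasDerivAt (fluxProf p Λ A a) d y ∧
        -d - Λ * fluxProf p Λ A a y = a y ^ (-(1 / (p - 1)))) :=
  stmt_8_general p ρ0 Λ A hp hρ a ha_pos hint hA
end
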